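/- Every factor-critical edge-critical equimatchable graph with at least one edge is vertex-critical equimatchable. -/

import Mathlib

open SimpleGraph

/-- `M` is a maximal matching of `G` (viewed as a subgraph of `G`): it is a matching and it is
not properly contained in any other matching of `G`. -/
def IsMaximalMatching {V : Type*} (G : SimpleGraph V) (M : G.Subgraph) : Prop :=
  M.IsMatching ∧ ∀ M' : G.Subgraph, M'.IsMatching → M ≤ M' → M' = M

/-- `G` is equimatchable if all maximal matchings of `G` have the same cardinality. -/
def Equimatchable {V : Type*} (G : SimpleGraph V) : Prop :=
  ∀ M₁ M₂ : G.Subgraph, IsMaximalMatching G M₁ → IsMaximalMatching G M₂ →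
    M₁.edgeSet.ncard = M₂.edgeSet.ncard

/-- The matching number ν(G): the maximum cardinality of a matching of `G`. -/
noncomputable def matchNum {V : Type*} (G : SimpleGraph V) : ℕ :=
  sSup {n : ℕ | ∃ M : G.Subgraph, M.IsMatching ∧ M.edgeSet.ncard = n}

/-- `G` is vertex-critical equimatchable (VCE): `G` is equimatchable and deleting any vertex
yields a non-equimatchable graph. -/
def VCE {V : Type*} (G : SimpleGraph V) : Prop :=
  Equimatchable G ∧ ∀ v : V, ¬ Equimatchable (G.induce {u | u ≠ v})

/-- `G` is edge-critical equimatchable (ECE): `G` is equimatchable and deleting any edge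
yields a non-equimatchable graph. -/
def ECE {V : Type*} (G : SimpleGraph V) : Prop :=
  Equimatchable G ∧ ∀ u v : V, G.Adj u v → ¬ Equimatchable (G.deleteEdges {s(u, v)})

/-- `G` is factor-critical: deleting any vertex yields a graph with a perfect matching. -/
def FactorCritical {V : Type*} (G : SimpleGraph V) : Prop :=
  ∀ v : V, ∃ M : (G.induce {u | u ≠ v}).Subgraph, M.IsPerfectMatching

/-- `G` is 2-connected: at least 3 vertices, connected, and deleting any vertex leaves a
connected graph. -/
def TwoConnected {V : Type*} [Fintype V] (G : SimpleGraph V) : Prop :=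
  3 ≤ Fintype.card V ∧ G.Connected ∧ ∀ v : V, (G.induce {u | u ≠ v}).Connected

/-- `G` is bipartite: its vertex set can be partitioned into two parts such that every edge
joins the two parts. -/
def IsBipartiteGraph {V : Type*} (G : SimpleGraph V) : Prop :=
  ∃ s : Set V, ∀ u w : V, G.Adj u w → (u ∈ s ↔ w ∉ s)

/-- `G` is randomly matchable: every matching of `G` extends to a perfect matching. -/
def RandomlyMatchable {V : Type*} (G : SimpleGraph V) : Prop :=
  ∀ M : G.Subgraph, M.IsMatching → ∃ P : G.Subgraph, M ≤ P ∧ P.IsPerfectMatching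

/-!
Suppose `G - v` were equimatchable. It has a perfect matching, so every matching of `G - v`
extends to a perfect one. Pick an edge `vu`. Every maximal matching `N` of `G - vu` is then
maximal in `G`: otherwise `v` and `u` are both exposed by `N`, and the partner `w` of `u` in a
perfect matching of `G - v` extending `N` is exposed too, so `uw` could be added to `N` in
`G - vu`. Hence `G - vu` inherits equimatchability from `G`, contradicting edge-criticality.
-/

section

variable {V : Type*} {G : SimpleGraph V}

namespace SimpleGraph.Subgraph

theorem IsMatching.ncard_verts [Finite V] {M : G.Subgraph} (hM : M.IsMatching) :
    M.verts.ncard = 2 * M.edgeSet.ncard := by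
  classical
  cases nonempty_fintype V
  have hdeg : ∀ v : M.verts, M.degree v = 1 := fun v =>
    degree_eq_one_iff_existsUnique_adj.mpr (hM v.2)
  rw [← image_coe_edgeSet_coe,
    Set.ncard_image_of_injective _ (Sym2.map.injective Subtype.val_injective),
    ← coe_edgeFinset, Set.ncard_coe_finset, ← M.coe.sum_degrees_eq_twice_card_edges]
  simp [hdeg, ← Nat.card_coe_set_eq]

theorem IsMatching.adj_of_le {M M' : G.Subgraph} (hM : M.IsMatching) (hM' : M'.IsMatching)
    (hle : M ≤ M') {x y : V} (hx : x ∈ M.verts) (hxy : M'.Adj x y) : M.Adj x y := by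
  obtain ⟨z, hxz, -⟩ := hM hx
  rwa [hM'.eq_of_adj_left hxy (hle.2 hxz)]

end SimpleGraph.Subgraph

open Subgraph

theorem isMaximalMatching_iff_maximal {M : G.Subgraph} :
    IsMaximalMatching G M ↔ Maximal IsMatching M :=
  ⟨fun ⟨hM, h⟩ => ⟨hM, fun M' hM' hle => (h M' hM' hle).le⟩,
    fun ⟨hM, h⟩ => ⟨hM, fun _ hM' hle => le_antisymm (h hM' hle) hle⟩⟩

theorem exists_isMaximalMatching_le [Finite V] {M : G.Subgraph} (hM : M.IsMatching) :
    ∃ N, M ≤ N ∧ IsMaximalMatching G N := by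
  simpa only [isMaximalMatching_iff_maximal] using Finite.exists_le_maximal hM

theorem isMaximalMatching_iff_forall_adj {M : G.Subgraph} (hM : M.IsMatching) :
    IsMaximalMatching G M ↔ ∀ ⦃x y⦄, G.Adj x y → x ∈ M.verts ∨ y ∈ M.verts := by
  constructor
  · rintro ⟨-, hmax⟩ x y hxy
    by_contra! hxyM
    have hdisj : Disjoint M.support (G.subgraphOfAdj hxy).support := by
      rw [hM.support_eq_verts, support_subgraphOfAdj, Set.disjoint_right]
      rintro a (rfl | rfl) <;> simp [hxyM]
    have hsup := hmax _ (hM.sup (.subgraphOfAdj hxy) hdisj) le_sup_left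
    exact hxyM.1 (hsup ▸ Or.inr (Set.mem_insert x {y}))
  · refine fun hcover => ⟨hM, fun M' hM' hle => IsMatching.injOn_edgeSet hM' hM ?_⟩
    refine subset_antisymm (fun e he => ?_) (edgeSet_mono hle)
    induction e using Sym2.ind with | _ x y
    rcases hcover (M'.adj_sub he) with hx | hy
    · exact hM.adj_of_le hM' hle hx he
    · exact (hM.adj_of_le hM' hle hy he.symm).symm

theorem SimpleGraph.Subgraph.IsPerfectMatching.isMaximalMatching {M : G.Subgraph}
    (hM : M.IsPerfectMatching) : IsMaximalMatching G M :=
  (isMaximalMatching_iff_forall_adj hM.1).mpr fun x _ _ => .inl (hM.2 x)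

theorem Equimatchable.isPerfectMatching_of_isMaximalMatching [Finite V] (hG : Equimatchable G)
    {P M : G.Subgraph} (hP : P.IsPerfectMatching) (hM : IsMaximalMatching G M) :
    M.IsPerfectMatching := by
  refine ⟨hM.1, isSpanning_iff.mpr ?_⟩
  refine Set.eq_of_subset_of_ncard_le (Set.subset_univ _) ?_ (Set.toFinite _)
  rw [hM.1.ncard_verts, hG M P hM hP.isMaximalMatching, ← hP.1.ncard_verts, hP.2.verts_eq_univ]

theorem Equimatchable.randomlyMatchable [Finite V] (hG : Equimatchable G) {P : G.Subgraph}
    (hP : P.IsPerfectMatching) : RandomlyMatchable G := fun _ hM =>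
  let ⟨N, hle, hN⟩ := exists_isMaximalMatching_le hM
  ⟨N, hle, hG.isPerfectMatching_of_isMaximalMatching hP hN⟩

theorem Equimatchable.of_le_of_isMaximalMatching_map {H : SimpleGraph V} (hG : Equimatchable G)
    (hHG : H ≤ G)
    (h : ∀ M : H.Subgraph, IsMaximalMatching H M → IsMaximalMatching G (M.map (.ofLE hHG))) :
    Equimatchable H := fun M₁ M₂ h₁ h₂ => by
  simpa using hG _ _ (h M₁ h₁) (h M₂ h₂)

theorem RandomlyMatchable.exists_adj_notMem_verts {s : Set V}
    (hs : RandomlyMatchable (G.induce s)) {N : G.Subgraph} (hN : N.IsMatching)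
    (hNs : N.verts ⊆ s) {u : V} (hu : u ∈ s) (huN : u ∉ N.verts) :
    ∃ w ∈ s, G.Adj u w ∧ w ∉ N.verts := by
  set N' := N.comap (Embedding.induce s).toHom
  have hN' : N'.IsMatching := by
    intro a ha
    obtain ⟨z, hz, hzuniq⟩ := hN ha
    exact ⟨⟨z, hNs (N.edge_vert hz.symm)⟩, ⟨N.adj_sub hz, hz⟩,
      fun b hb => Subtype.ext (hzuniq b hb.2)⟩
  obtain ⟨P, hle, hP⟩ := hs N' hN'
  obtain ⟨w, huw, -⟩ := hP.1 (hP.2 ⟨u, hu⟩)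
  refine ⟨w, w.2, P.adj_sub huw, fun hwN => huN ?_⟩
  obtain ⟨z, hwz, -⟩ := hN' (show w ∈ N'.verts from hwN)
  rw [← hP.1.eq_of_adj_left huw.symm (hle.2 hwz)] at hwz
  exact N.edge_vert hwz.2.symm

theorem Equimatchable.deleteEdges_of_randomlyMatchable [Finite V] (hG : Equimatchable G)
    {u v : V} (hvu : G.Adj v u) (hv : RandomlyMatchable (G.induce {x | x ≠ v})) :
    Equimatchable (G.deleteEdges {s(v, u)}) := by
  refine hG.of_le_of_isMaximalMatching_map (G.deleteEdges_le _) fun N hN => ?_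
  set M := N.map (.ofLE (G.deleteEdges_le {s(v, u)}))
  have hM : M.IsMatching := hN.1.map_ofLE _
  have hMN : M.verts = N.verts := Set.image_id _
  rw [isMaximalMatching_iff_forall_adj hN.1] at hN
  rw [isMaximalMatching_iff_forall_adj hM, hMN]
  intro x y hxy
  by_contra! hxyN
  by_cases hvu' : s(x, y) = s(v, u)
  · obtain ⟨hvN, huN⟩ : v ∉ N.verts ∧ u ∉ N.verts := by
      rcases Sym2.eq_iff.mp hvu' with ⟨rfl, rfl⟩ | ⟨rfl, rfl⟩ <;> tauto
    have hMv : M.verts ⊆ {x | x ≠ v} := by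
      rw [hMN]
      rintro z hz rfl
      exact hvN hz
    obtain ⟨w, hwv, huw, hwN⟩ := hv.exists_adj_notMem_verts hM hMv hvu.ne.symm (hMN ▸ huN)
    have hne : s(u, w) ∉ ({s(v, u)} : Set (Sym2 V)) := by
      simpa [hvu.ne.symm] using hwv
    exact (hN (deleteEdges_adj.mpr ⟨huw, hne⟩)).elim huN (hMN ▸ hwN)
  · exact hxyN.1 ((hN (deleteEdges_adj.mpr ⟨hxy, hvu'⟩)).resolve_right hxyN.2)

theorem FactorCritical.exists_adj [Nontrivial V] (hG : FactorCritical G) (v : V) :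
    ∃ u, G.Adj v u := by
  obtain ⟨w, hwv⟩ := exists_ne v
  obtain ⟨M, hM⟩ := hG w
  obtain ⟨u, hvu, -⟩ := hM.1 (hM.2 ⟨v, hwv.symm⟩)
  exact ⟨u, M.adj_sub hvu⟩

end

/-- Every factor-critical edge-critical equimatchable graph with at least one edge is
vertex-critical equimatchable. -/
theorem fc_ece_vce {V : Type*} [Fintype V] (G : SimpleGraph V)
    (hfc : FactorCritical G) (hece : ECE G) (hedge : G.edgeSet.Nonempty) :
    VCE G := by
  have : Nontrivial V :=
    SimpleGraph.nontrivial_iff.mp (nontrivial_of_ne G ⊥ (edgeSet_nonempty.mp hedge))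
  refine ⟨hece.1, fun v hv => ?_⟩
  obtain ⟨u, hvu⟩ := hfc.exists_adj v
  obtain ⟨P, hP⟩ := hfc v
  exact hece.2 v u hvu (hece.1.deleteEdges_of_randomlyMatchable hvu (hv.randomlyMatchable hP))
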